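/- Let k ≥ 1 and r ≥ 2k+1. Let A_1, A_2 be subsets of the degree-3 vertices of the r-wall H_r with |A_1| = |A_2| = 2k². Then there is no set U ⊆ V(H_r) with A_1 ⊆ U, A_2 ⊆ V(H_r) \ U, and |δ(U)| < k. -/

import Mathlib

open Sym2

/-- A finite multigraph: finite vertex and edge types, each edge has an
unordered pair of endpoints, and there are no loops. -/
structure Multigraph where
  V : Type
  E : Type
  finV : Finite V
  finE : Finite E
  ends : E → Sym2 V
  no_loops : ∀ e, ¬ (ends e).IsDiag

attribute [instance] Multigraph.finV Multigraph.finE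

namespace Multigraph

/-- `IsWalk G vs es`: `vs` is the vertex sequence and `es` the edge sequence of a
walk in `G`. -/
inductive IsWalk (G : Multigraph) : List G.V → List G.E → Prop
  | nil (v : G.V) : IsWalk G [v] []
  | cons {v : G.V} {vs : List G.V} {es : List G.E} (u : G.V) (e : G.E)
      (he : G.ends e = s(u, v)) (hw : IsWalk G (v :: vs) es) :
      IsWalk G (u :: v :: vs) (e :: es)

/-- A path from `a` to `b` in the multigraph `G`, given by its vertex sequence `vs`
and edge sequence `es`. -/
def IsPathBetween (G : Multigraph) (a b : G.V) (vs : List G.V) (es : List G.E) : Prop :=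
  G.IsWalk vs es ∧ vs.Nodup ∧ vs.head? = some a ∧ vs.getLast? = some b

/-- A weak immersion of `H` into `G`. -/
structure WeakImmersion (H G : Multigraph) where
  vmap : H.V → G.V
  vmap_inj : Function.Injective vmap
  pverts : H.E → List G.V
  pedges : H.E → List G.E
  is_path : ∀ f : H.E, ∃ x y : H.V, H.ends f = s(x, y) ∧
    G.IsPathBetween (vmap x) (vmap y) (pverts f) (pedges f)
  edge_disjoint : ∀ f f' : H.E, f ≠ f' → ∀ e, e ∈ pedges f → e ∉ pedges f'

/-- `G.Immerses H`: `G` admits a weak immersion of `H`. -/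
def Immerses (G H : Multigraph) : Prop := Nonempty (WeakImmersion H G)

/-- The degree of a vertex: the number of edges incident with it. -/
noncomputable def degree (G : Multigraph) (v : G.V) : ℕ :=
  Nat.card {e : G.E // v ∈ G.ends e}

/-- The edge cut `δ(U)`: edges with exactly one endpoint in `U`. -/
def edgeCut (G : Multigraph) (U : Set G.V) : Set G.E :=
  {e | ∃ a b, G.ends e = s(a, b) ∧ a ∈ U ∧ b ∉ U}

/-- There exist `k` pairwise edge-disjoint paths from `a` to `b` in `G`. -/
def EdgeDisjointPaths (G : Multigraph) (a b : G.V) (k : ℕ) : Prop :=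
  ∃ (vs : Fin k → List G.V) (es : Fin k → List G.E),
    (∀ i, G.IsPathBetween a b (vs i) (es i)) ∧
    ∀ i j, i ≠ j → ∀ e, e ∈ es i → e ∉ es j

/-- Isomorphism of multigraphs. -/
structure Iso (G H : Multigraph) where
  vmap : G.V ≃ H.V
  emap : G.E ≃ H.E
  ends_map : ∀ e, H.ends (emap e) = Sym2.map vmap (G.ends e)

/-- The complete graph `K_t` as a multigraph. -/
def completeGraph (t : ℕ) : Multigraph where
  V := Fin t
  E := {p : Sym2 (Fin t) // ¬ p.IsDiag}
  finV := inferInstance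
  finE := inferInstance
  ends := Subtype.val
  no_loops := fun e => e.prop

/-- The multigraph `S_{k,n}`: vertices `x_1, …, x_n, y` (with `y = none`) and `k`
parallel edges from each `x_i` to `y`. -/
def star (k n : ℕ) : Multigraph where
  V := Option (Fin n)
  E := Fin n × Fin k
  finV := inferInstance
  finE := inferInstance
  ends := fun p => s(some p.1, none)
  no_loops := fun p => by simp [Sym2.mk_isDiag_iff]

/-! ### Edge sums -/

/-- A witness that `G` is a `k`-edge sum of `G₁` and `G₂`. -/
structure EdgeSumWitness (k : ℕ) (G G₁ G₂ : Multigraph) where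
  v₁ : G₁.V
  v₂ : G₂.V
  deg₁ : G₁.degree v₁ = k
  deg₂ : G₂.degree v₂ = k
  π : {e : G₁.E // v₁ ∈ G₁.ends e} ≃ {e : G₂.E // v₂ ∈ G₂.ends e}
  α : G.V ≃ {x : G₁.V // x ≠ v₁} ⊕ {y : G₂.V // y ≠ v₂}
  β : G.E ≃ ({e : G₁.E // v₁ ∉ G₁.ends e} ⊕ {e : G₂.E // v₂ ∉ G₂.ends e}) ⊕
      {e : G₁.E // v₁ ∈ G₁.ends e}
  ends₁ : ∀ (e : {e : G₁.E // v₁ ∉ G₁.ends e}) (x y : G₁.V) (hx : x ≠ v₁) (hy : y ≠ v₁),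
    G₁.ends e.val = s(x, y) →
      G.ends (β.symm (Sum.inl (Sum.inl e))) = s(α.symm (Sum.inl ⟨x, hx⟩), α.symm (Sum.inl ⟨y, hy⟩))
  ends₂ : ∀ (e : {e : G₂.E // v₂ ∉ G₂.ends e}) (x y : G₂.V) (hx : x ≠ v₂) (hy : y ≠ v₂),
    G₂.ends e.val = s(x, y) →
      G.ends (β.symm (Sum.inl (Sum.inr e))) = s(α.symm (Sum.inr ⟨x, hx⟩), α.symm (Sum.inr ⟨y, hy⟩))
  ends₃ : ∀ (e : {e : G₁.E // v₁ ∈ G₁.ends e}) (x : G₁.V) (y : G₂.V) (hx : x ≠ v₁) (hy : y ≠ v₂),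
    G₁.ends e.val = s(x, v₁) → G₂.ends (π e).val = s(y, v₂) →
      G.ends (β.symm (Sum.inr e)) = s(α.symm (Sum.inl ⟨x, hx⟩), α.symm (Sum.inr ⟨y, hy⟩))

/-- `G` is a `k`-edge sum of `G₁` and `G₂`. -/
def IsEdgeSum (k : ℕ) (G G₁ G₂ : Multigraph) : Prop :=
  Nonempty (EdgeSumWitness k G G₁ G₂)

/-- The edge sum is grounded. -/
def EdgeSumWitness.Grounded {k : ℕ} {G G₁ G₂ : Multigraph}
    (w : EdgeSumWitness k G G₁ G₂) : Prop :=
  (∃ v', v' ≠ w.v₁ ∧ G₁.EdgeDisjointPaths w.v₁ v' k) ∧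
  (∃ v', v' ≠ w.v₂ ∧ G₂.EdgeDisjointPaths w.v₂ v' k)

/-- `G` is a grounded `k`-edge sum of `G₁` and `G₂`. -/
def IsGroundedEdgeSum (k : ℕ) (G G₁ G₂ : Multigraph) : Prop :=
  ∃ w : EdgeSumWitness k G G₁ G₂, w.Grounded

/-! ### Auxiliary simple-graph operations -/

/-- Delete the vertex `t` from `T` (keeping it as an isolated vertex). -/
def delAt {τ : Type} (T : SimpleGraph τ) (t : τ) : SimpleGraph τ where
  Adj a b := T.Adj a b ∧ a ≠ t ∧ b ≠ t
  symm := ⟨fun a b (h : T.Adj a b ∧ a ≠ t ∧ b ≠ t) => ⟨h.1.symm, h.2.2, h.2.1⟩⟩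
  loopless := ⟨fun a (h : T.Adj a a ∧ a ≠ t ∧ a ≠ t) => T.irrefl h.1⟩

lemma reach_delAt {τ : Type} (T : SimpleGraph τ) (t : τ) {a b : τ} (q : T.Walk a b)
    (ht : t ∉ q.support) : (delAt T t).Reachable a b := by
  induction q with
  | nil => exact SimpleGraph.Reachable.refl _
  | @cons u v w h p ih =>
      simp only [SimpleGraph.Walk.support_cons, List.mem_cons] at ht
      push_neg at ht
      have hv : v ≠ t := fun hv => ht.2 (hv ▸ p.start_mem_support)
      exact (SimpleGraph.Adj.reachable (show (delAt T t).Adj u v from ⟨h, Ne.symm ht.1, hv⟩)).trans (ih ht.2)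

/-! ### Tree-cut decompositions -/

/-- A tree-cut decomposition of the multigraph `G`. -/
structure TreeCutDecomp (G : Multigraph) where
  T : Type
  finT : Finite T
  tree : SimpleGraph T
  isTree : tree.IsTree
  bag : T → Set G.V
  disj : ∀ s t : T, s ≠ t → Disjoint (bag s) (bag t)
  covers : ∀ v : G.V, ∃ t : T, v ∈ bag t

attribute [instance] TreeCutDecomp.finT

variable {G : Multigraph}

/-- The union of the bags on the `v`-side of the tree edge `uv`. -/
def TreeCutDecomp.sideSet (D : TreeCutDecomp G) (u v : D.T) : Set G.V :=
  {x | ∃ s, (D.tree.deleteEdges {s(u, v)}).Reachable v s ∧ x ∈ D.bag s}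

/-- The adhesion of a tree-cut decomposition. -/
noncomputable def TreeCutDecomp.adhesion (D : TreeCutDecomp G) : ℕ :=
  sSup {n | ∃ u v : D.T, D.tree.Adj u v ∧ n = (G.edgeCut (D.sideSet u v)).ncard}

lemma TreeCutDecomp.exists_periph (D : TreeCutDecomp G) (t : D.T) (v : G.V)
    (hv : v ∉ D.bag t) :
    ∃ u : D.T, D.tree.Adj t u ∧ ∃ s, v ∈ D.bag s ∧ (delAt D.tree t).Reachable s u := by
  classical
  obtain ⟨s, hs⟩ := D.covers v
  have hst : t ≠ s := fun h => hv (h ▸ hs)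
  obtain ⟨w⟩ := D.isTree.isConnected.preconnected t s
  obtain ⟨x, hadj, q, hq⟩ := SimpleGraph.Walk.exists_eq_cons_of_ne hst w.toPath.val
  have hP : (SimpleGraph.Walk.cons hadj q).IsPath := hq ▸ w.toPath.prop
  rw [SimpleGraph.Walk.cons_isPath_iff] at hP
  exact ⟨x, hadj, s, hs, (reach_delAt D.tree t q hP.2).symm⟩

open Classical in
/-- The map from `G` to the vertices of the torso at `t`. -/
noncomputable def TreeCutDecomp.proj (D : TreeCutDecomp G) (t : D.T) (v : G.V) :
    ↥(D.bag t) ⊕ {u : D.T // D.tree.Adj t u} :=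
  if hv : v ∈ D.bag t then Sum.inl ⟨v, hv⟩
  else Sum.inr ⟨(D.exists_periph t v hv).choose, (D.exists_periph t v hv).choose_spec.1⟩

/-- The torso of `G` at a node `t` of a tree-cut decomposition. -/
noncomputable def TreeCutDecomp.torso (D : TreeCutDecomp G) (t : D.T) : Multigraph where
  V := ↥(D.bag t) ⊕ {u : D.T // D.tree.Adj t u}
  E := {e : G.E // ¬ (Sym2.map (D.proj t) (G.ends e)).IsDiag}
  finV := inferInstance
  finE := inferInstance
  ends := fun e => Sym2.map (D.proj t) (G.ends e.val)
  no_loops := fun e => e.prop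

/-- The core vertices of the torso at `t`. -/
def TreeCutDecomp.torsoCore (D : TreeCutDecomp G) (t : D.T) : Set (D.torso t).V :=
  Set.range Sum.inl

/-! ### The 3-center and tree-cut width -/

/-- Condition (1): the immersion of `H` in `G` covers `X` and every vertex of `H`
of degree at most two is mapped into `X`. -/
def CenterCond (G : Multigraph) (X : Set G.V) (H : Multigraph) (I : WeakImmersion H G) : Prop :=
  X ⊆ Set.range I.vmap ∧ ∀ x : H.V, H.degree x ≤ 2 → I.vmap x ∈ X

/-- `C` is a 3-center of `(G, X)`: it admits an immersion in `G` satisfying (1) and is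
maximal with respect to immersion containment among all such graphs. -/
def IsThreeCenter (G : Multigraph) (X : Set G.V) (C : Multigraph) : Prop :=
  (∃ I : WeakImmersion C G, CenterCond G X C I) ∧
  ∀ H : Multigraph, (∃ I : WeakImmersion H G, CenterCond G X H I) → C.Immerses H

/-- The number of vertices of the 3-center of `(G, X)`. -/
noncomputable def threeCenterCard (G : Multigraph) (X : Set G.V) : ℕ :=
  sSup {n | ∃ C : Multigraph, IsThreeCenter G X C ∧ Nat.card C.V = n}

/-- The width of a tree-cut decomposition. -/
noncomputable def TreeCutDecomp.width (D : TreeCutDecomp G) : ℕ :=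
  max D.adhesion (sSup {n | ∃ t : D.T, n = threeCenterCard (D.torso t) (D.torsoCore t)})

/-- The tree-cut width of a multigraph. -/
noncomputable def tcw (G : Multigraph) : ℕ :=
  sInf {w | ∃ D : TreeCutDecomp G, D.width = w}

/-! ### Tree decompositions and tree-width -/

/-- A tree decomposition of the multigraph `G`. -/
structure TreeDecomp (G : Multigraph) where
  T : Type
  finT : Finite T
  tree : SimpleGraph T
  isTree : tree.IsTree
  bag : T → Set G.V
  covers_v : ∀ v : G.V, ∃ t : T, v ∈ bag t
  covers_e : ∀ e : G.E, ∃ (t : T) (x y : G.V), G.ends e = s(x, y) ∧ x ∈ bag t ∧ y ∈ bag t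
  connected : ∀ v : G.V, (SimpleGraph.induce {t : T | v ∈ bag t} tree).Connected

/-- The tree-width of a multigraph. -/
noncomputable def treewidth (G : Multigraph) : ℕ :=
  sInf {n | ∃ D : TreeDecomp G, ∀ t : D.T, (D.bag t).ncard ≤ n + 1}

/-! ### Walls and grids -/

def wallStep (r : ℕ) (a b : Fin r × Fin r) : Prop :=
  (a.1 = b.1 ∧ a.2.val + 1 = b.2.val) ∨
  (a.2 = b.2 ∧ a.1.val + 1 = b.1.val ∧ (a.1.val + 1) % 2 = (a.2.val + 1) % 2)

def wallAdj (r : ℕ) (a b : Fin r × Fin r) : Prop := wallStep r a b ∨ wallStep r b a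

lemma wallStep_ne {r : ℕ} {a b : Fin r × Fin r} (h : wallStep r a b) : a ≠ b := by
  rintro rfl
  rcases h with ⟨-, h⟩ | ⟨-, h, -⟩ <;> omega

/-- The `r`-wall `H_r`. -/
def wall (r : ℕ) : Multigraph where
  V := Fin r × Fin r
  E := {q : Sym2 (Fin r × Fin r) // ∃ a b, q = s(a, b) ∧ wallAdj r a b}
  finV := inferInstance
  finE := inferInstance
  ends := Subtype.val
  no_loops := by
    rintro ⟨q, a, b, rfl, hab⟩ hd
    rw [Sym2.mk_isDiag_iff] at hd
    subst hd
    rcases hab with h | h <;> exact wallStep_ne h rfl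

def gridStep (r : ℕ) (a b : Fin r × Fin r) : Prop :=
  (a.1 = b.1 ∧ a.2.val + 1 = b.2.val) ∨ (a.2 = b.2 ∧ a.1.val + 1 = b.1.val)

def gridAdj (r : ℕ) (a b : Fin r × Fin r) : Prop := gridStep r a b ∨ gridStep r b a

lemma gridStep_ne {r : ℕ} {a b : Fin r × Fin r} (h : gridStep r a b) : a ≠ b := by
  rintro rfl
  rcases h with ⟨-, h⟩ | ⟨-, h⟩ <;> omega

/-- The `r × r` grid. -/
def grid (r : ℕ) : Multigraph where
  V := Fin r × Fin r
  E := {q : Sym2 (Fin r × Fin r) // ∃ a b, q = s(a, b) ∧ gridAdj r a b}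
  finV := inferInstance
  finE := inferInstance
  ends := Subtype.val
  no_loops := by
    rintro ⟨q, a, b, rfl, hab⟩ hd
    rw [Sym2.mk_isDiag_iff] at hd
    subst hd
    rcases hab with h | h <;> exact gridStep_ne h rfl

/-! ### Subdivisions and minors -/

/-- `G` contains `H` as a subdivision: an immersion whose composite paths pairwise
meet only in common endpoints. -/
def ContainsSubdivision (G H : Multigraph) : Prop :=
  ∃ I : WeakImmersion H G, ∀ f f' : H.E, f ≠ f' → ∀ v : G.V,
    v ∈ I.pverts f → v ∈ I.pverts f' →
      ((I.pverts f).head? = some v ∨ (I.pverts f).getLast? = some v) ∧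
      ((I.pverts f').head? = some v ∨ (I.pverts f').getLast? = some v)

/-- A set of vertices is connected in `G`. -/
def ConnectedIn (G : Multigraph) (B : Set G.V) : Prop :=
  B.Nonempty ∧ ∀ a ∈ B, ∀ b ∈ B, ∃ (vs : List G.V) (es : List G.E),
    G.IsWalk vs es ∧ vs.head? = some a ∧ vs.getLast? = some b ∧ ∀ v ∈ vs, v ∈ B

/-- `G` contains `H` as a minor. -/
def HasMinor (G H : Multigraph) : Prop :=
  ∃ B : H.V → Set G.V,
    (∀ x, G.ConnectedIn (B x)) ∧
    (∀ x y, x ≠ y → Disjoint (B x) (B y)) ∧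
    ∃ η : H.E → G.E, Function.Injective η ∧
      ∀ (f : H.E) (x y : H.V), H.ends f = s(x, y) →
        ∃ a b, G.ends (η f) = s(a, b) ∧ a ∈ B x ∧ b ∈ B y

/-! ### Subgraphs, splitting off, suppression -/

/-- `A` is (isomorphic to) a subgraph of `G`. -/
def IsSubgraph (A G : Multigraph) : Prop :=
  ∃ (fv : A.V → G.V) (fe : A.E → G.E), Function.Injective fv ∧ Function.Injective fe ∧
    ∀ e, G.ends (fe e) = Sym2.map fv (A.ends e)

/-- `B` is obtained from `A` by splitting off a pair of incident edges. -/
def SplitOffRel (A B : Multigraph) : Prop :=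
  ∃ (e₁ e₂ : A.E) (x y z : A.V), e₁ ≠ e₂ ∧ x ≠ z ∧
    A.ends e₁ = s(x, y) ∧ A.ends e₂ = s(y, z) ∧
    ∃ (fV : A.V ≃ B.V) (fE : {e : A.E // e ≠ e₁ ∧ e ≠ e₂} ⊕ Unit ≃ B.E),
      (∀ e : {e : A.E // e ≠ e₁ ∧ e ≠ e₂},
        B.ends (fE (Sum.inl e)) = Sym2.map fV (A.ends e.val)) ∧
      B.ends (fE (Sum.inr ())) = s(fV x, fV z)

/-- `B` is obtained from `A` by suppressing a vertex of degree two (contracting one of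
its incident edges and deleting any resulting loops). -/
def SuppressTwoRel (A B : Multigraph) : Prop :=
  ∃ v : A.V, A.degree v = 2 ∧
    ∃ σ : A.V → B.V,
      (∀ x y, x ≠ v → y ≠ v → (σ x = σ y ↔ x = y)) ∧
      (∀ y : B.V, ∃ x, x ≠ v ∧ σ x = y) ∧
      (∃ a, a ≠ v ∧ (∃ e, A.ends e = s(v, a)) ∧ σ v = σ a) ∧
      ∃ τ : {e : A.E // ¬ (Sym2.map σ (A.ends e)).IsDiag} ≃ B.E,
        ∀ e, B.ends (τ e) = Sym2.map σ (A.ends e.val)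

/-- A multigraph together with a marked set of vertices. -/
structure MarkedGraph where
  G : Multigraph
  X : Set G.V

/-- One step of suppressing a vertex outside the marked set of degree at most two
(for degree zero this deletes the vertex). -/
def SuppressStep (A B : MarkedGraph) : Prop :=
  ∃ v : A.G.V, v ∉ A.X ∧ A.G.degree v ≤ 2 ∧
    ∃ σ : A.G.V → B.G.V,
      (∀ x y, x ≠ v → y ≠ v → (σ x = σ y ↔ x = y)) ∧
      (∀ y : B.G.V, ∃ x, x ≠ v ∧ σ x = y) ∧
      B.X = {y | ∃ x, x ∈ A.X ∧ σ x = y} ∧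
      (1 ≤ A.G.degree v → ∃ a, a ≠ v ∧ (∃ e, A.G.ends e = s(v, a)) ∧ σ v = σ a) ∧
      ∃ τ : {e : A.G.E // ¬ (Sym2.map σ (A.G.ends e)).IsDiag} ≃ B.G.E,
        ∀ e, B.G.ends (τ e) = Sym2.map σ (A.G.ends e.val)

/-! ### Trees and cycles as multigraphs -/

/-- A multigraph is a tree if it corresponds to a simple tree on its vertex set. -/
def IsTreeGraph (G : Multigraph) : Prop :=
  ∃ S : SimpleGraph G.V, S.IsTree ∧ ∃ φ : G.E ≃ S.edgeSet, ∀ e, (φ e : Sym2 G.V) = G.ends e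

/-- The cycle on `n + 3` vertices. -/
def cycleGraph (n : ℕ) : Multigraph where
  V := Fin (n + 3)
  E := Fin (n + 3)
  finV := inferInstance
  finE := inferInstance
  ends := fun i => s(i, i + 1)
  no_loops := by
    intro i hd
    rw [Sym2.mk_isDiag_iff] at hd
    have h1 : (i : Fin (n + 3)) + 0 = i + 1 := by simpa using hd
    have h01 : (0 : Fin (n + 3)) = 1 := add_left_cancel h1
    have := congrArg Fin.val h01
    simp [Fin.val_one] at this

/-- A matching in a multigraph: a set of pairwise vertex-disjoint edges. -/
def IsMatching (G : Multigraph) (M : Set G.E) : Prop :=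
  ∀ e ∈ M, ∀ e' ∈ M, e ≠ e' → ∀ v : G.V, v ∈ G.ends e → v ∉ G.ends e'

end Multigraph

/-!
Every path of the wall with vertices on both sides of `U` contains an edge of `δ(U)`. The rows
of `H_r` are disjoint paths, and so are its brick columns (columns `2t` and `2t+1` together,
a zigzag path); hence if `|δ(U)| < k` fewer than `k` rows and fewer than `k` brick columns
meet both `U` and its complement. Some row then lies on one side, say inside `U`. If another row
lies outside `U`, every one of the `⌊r/2⌋ ≥ k` brick columns meets both sides, which is too many.
Otherwise every row meets `U`, so every vertex outside `U` lies in a split row and in a split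
brick column (or in the last column when `r` is odd), and there are at most `2(k-1)k < 2k²` of
those.
-/

def Set.Straddles {α : Type*} (S U : Set α) : Prop :=
  (S ∩ U).Nonempty ∧ (S \ U).Nonempty

namespace Multigraph

section

variable {G : Multigraph} {U : Set G.V}

theorem edgeCut_compl : G.edgeCut Uᶜ = G.edgeCut U := by
  ext e
  constructor <;>
  · rintro ⟨a, b, he, ha, hb⟩
    exact ⟨b, a, he.trans Sym2.eq_swap, by simpa using hb, by simpa using ha⟩

theorem exists_mem_edgeCut_of_preconnected {α : Type*} {H : SimpleGraph α}
    (hH : H.Preconnected) {γ : α → G.V} (hγ : ∀ a b, H.Adj a b → ∃ e, G.ends e = s(γ a, γ b))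
    (hU : (Set.range γ).Straddles U) :
    ∃ e ∈ G.edgeCut U, ∀ v ∈ G.ends e, v ∈ Set.range γ := by
  obtain ⟨⟨_, ⟨x, rfl⟩, hx⟩, ⟨_, ⟨y, rfl⟩, hy⟩⟩ := hU
  obtain ⟨d, -, hd, hd'⟩ := (hH x y).some.exists_boundary_dart (γ ⁻¹' U) hx hy
  obtain ⟨e, he⟩ := hγ _ _ d.adj
  refine ⟨e, ⟨_, _, he, hd, hd'⟩, ?_⟩
  intro v hv
  rw [he, Sym2.mem_iff] at hv
  rcases hv with rfl | rfl
  exacts [⟨_, rfl⟩, ⟨_, rfl⟩]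

theorem ncard_le_ncard_edgeCut {ι : Type*} {I : Set ι} {S : ι → Set G.V}
    (hS : I.PairwiseDisjoint S) (hcut : ∀ i ∈ I, ∃ e ∈ G.edgeCut U, ∀ v ∈ G.ends e, v ∈ S i) :
    I.ncard ≤ (G.edgeCut U).ncard := by
  rcases I.eq_empty_or_nonempty with rfl | ⟨i₀, hi₀⟩
  · simp
  have : Nonempty G.E := ⟨(hcut i₀ hi₀).choose⟩
  choose! f hfU hfS using hcut
  refine Set.ncard_le_ncard_of_injOn f hfU fun i hi j hj hij => ?_
  have hv := (G.ends (f i)).out_fst_mem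
  exact hS.elim hi hj (Set.not_disjoint_iff.mpr ⟨_, hfS i hi _ hv, hfS j hj _ (hij ▸ hv)⟩)

end

variable {r : ℕ} {U : Set (wall r).V}

theorem wall_ends_of_adj {a b : Fin r × Fin r} (h : wallAdj r a b) :
    ∃ e, (wall r).ends e = s(a, b) :=
  ⟨⟨s(a, b), a, b, rfl, h⟩, rfl⟩

theorem wall_exists_mem_edgeCut_of_chain {n : ℕ} {γ : Fin n → Fin r × Fin r}
    (hγ : ∀ a b : Fin n, a.val + 1 = b.val → wallAdj r (γ a) (γ b))
    (hU : (Set.range γ).Straddles U) :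
    ∃ e ∈ (wall r).edgeCut U, ∀ v ∈ (wall r).ends e, v ∈ Set.range γ := by
  refine exists_mem_edgeCut_of_preconnected (SimpleGraph.pathGraph_preconnected n) ?_ hU
  intro a b hab
  rcases SimpleGraph.pathGraph_adj.mp hab with h | h
  · exact wall_ends_of_adj (hγ a b h)
  · obtain ⟨e, he⟩ := wall_ends_of_adj (hγ b a h)
    exact ⟨e, he.trans Sym2.eq_swap⟩

def wallRow (r : ℕ) (i : Fin r) : Set (Fin r × Fin r) := {v | v.1 = i}

def brickColumn (r t : ℕ) : Set (Fin r × Fin r) := {v | v.2.val / 2 = t}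

/-- Columns `2t` and `2t+1` form a zigzag path, since consecutive rungs `(i, 2t)(i, 2t+1)` are
joined in column `2t` when `i` is even and in column `2t+1` when `i` is odd. -/
def brickPath (r t : ℕ) (ht : t < r / 2) (p : Fin (2 * r)) : Fin r × Fin r :=
  (⟨p / 2, by omega⟩, ⟨2 * t + (p / 2 + p + 1) % 2, by omega⟩)

theorem range_wallRow (i : Fin r) : Set.range (fun j => (i, j)) = wallRow r i := by
  ext ⟨i', j⟩
  simp [wallRow, eq_comm]

theorem range_brickPath {t : ℕ} (ht : t < r / 2) :
    Set.range (brickPath r t ht) = brickColumn r t := by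
  ext ⟨i, j⟩
  simp only [Set.mem_range, brickPath, brickColumn, Set.mem_ofPred_eq, Prod.ext_iff, Fin.ext_iff]
  constructor
  · rintro ⟨p, hi, hj⟩
    omega
  · intro hj
    refine ⟨⟨2 * i + (i + j + 1) % 2, by omega⟩, ?_, ?_⟩ <;> simp only <;> omega

theorem brickPath_adj {t : ℕ} (ht : t < r / 2) (p q : Fin (2 * r)) (hpq : p.val + 1 = q.val) :
    wallAdj r (brickPath r t ht p) (brickPath r t ht q) := by
  simp only [wallAdj, wallStep, brickPath, Fin.ext_iff]
  omega

theorem ncard_straddling_rows_le :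
    {i | (wallRow r i).Straddles U}.ncard ≤ ((wall r).edgeCut U).ncard := by
  refine ncard_le_ncard_edgeCut (S := wallRow r)
    (fun i _ j _ hij => Set.disjoint_left.mpr fun v hv hv' => hij (hv.symm.trans hv')) ?_
  intro i (hi : (wallRow r i).Straddles U)
  rw [← range_wallRow] at hi ⊢
  exact wall_exists_mem_edgeCut_of_chain (fun a b h => Or.inl (Or.inl ⟨rfl, h⟩)) hi

theorem ncard_straddling_brickColumns_le :
    {t | t < r / 2 ∧ (brickColumn r t).Straddles U}.ncard ≤ ((wall r).edgeCut U).ncard := by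
  refine ncard_le_ncard_edgeCut (S := brickColumn r)
    (fun s _ t _ hst => Set.disjoint_left.mpr fun v hv hv' => hst (hv.symm.trans hv')) ?_
  rintro t ⟨ht, hU⟩
  rw [← range_brickPath ht] at hU ⊢
  exact wall_exists_mem_edgeCut_of_chain (brickPath_adj ht) hU

theorem exists_wallRow_subset (h : ((wall r).edgeCut U).ncard < r) :
    ∃ i, wallRow r i ⊆ U ∨ wallRow r i ⊆ Uᶜ := by
  obtain ⟨i, hi⟩ : ∃ i, ¬ (wallRow r i).Straddles U := by
    by_contra! hall
    have := (ncard_straddling_rows_le (U := U)).trans_lt h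
    have huniv : {i | (wallRow r i).Straddles U} = Set.univ := Set.eq_univ_of_forall hall
    rw [huniv, Set.ncard_univ, Nat.card_fin] at this
    exact this.false
  refine ⟨i, ?_⟩
  simp only [Set.Straddles, not_and_or, Set.not_nonempty_iff_eq_empty] at hi
  rcases hi with h | h
  · exact Or.inr (Set.subset_compl_iff_disjoint_right.mpr (Set.disjoint_iff_inter_eq_empty.mpr h))
  · exact Or.inl (Set.sdiff_eq_empty.mp h)

theorem half_le_ncard_edgeCut {i₁ i₂ : Fin r} (h₁ : wallRow r i₁ ⊆ U) (h₂ : wallRow r i₂ ⊆ Uᶜ) :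
    r / 2 ≤ ((wall r).edgeCut U).ncard := by
  have hall : Set.Iio (r / 2) ⊆ {t | t < r / 2 ∧ (brickColumn r t).Straddles U} := by
    intro t (ht : t < r / 2)
    have hc : ∀ i, (i, (⟨2 * t, by omega⟩ : Fin r)) ∈ brickColumn r t := fun _ => by
      simp [brickColumn]
    exact ⟨ht, ⟨_, hc i₁, h₁ rfl⟩, ⟨_, hc i₂, h₂ rfl⟩⟩
  calc r / 2 = (Set.Iio (r / 2)).ncard := (Set.ncard_Iio_nat _).symm
    _ ≤ _ := Set.ncard_le_ncard hall ((Set.finite_Iio _).subset fun t ht => ht.1)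
    _ ≤ _ := ncard_straddling_brickColumns_le

theorem ncard_rows_prod_brickColumns_le (R : Set (Fin r)) {T : Set ℕ} (hT : T.Finite) :
    {v : Fin r × Fin r | v.1 ∈ R ∧ v.2.val / 2 ∈ T}.ncard ≤ 2 * R.ncard * T.ncard := by
  calc _ ≤ (R ×ˢ T ×ˢ Set.Iio 2).ncard :=
        Set.ncard_le_ncard_of_injOn (fun v => (v.1, v.2.val / 2, v.2.val % 2))
          (fun v hv => ⟨hv.1, hv.2, Nat.mod_lt _ two_pos⟩)
          (fun v _ w _ h => by simp only [Prod.ext_iff, Fin.ext_iff] at h ⊢; omega)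
          ((Set.toFinite R).prod (hT.prod (Set.finite_Iio 2)))
    _ = 2 * R.ncard * T.ncard := by simp only [Set.ncard_prod, Set.ncard_Iio_nat]; ring

theorem ncard_le_of_subset_compl {i₀ : Fin r} (h₀ : wallRow r i₀ ⊆ U)
    (hrows : ∀ i, (wallRow r i ∩ U).Nonempty) {B : Set (wall r).V} (hB : B ⊆ Uᶜ) :
    B.ncard ≤ 2 * ((wall r).edgeCut U).ncard * (((wall r).edgeCut U).ncard + 1) := by
  set T := {t | t < r / 2 ∧ (brickColumn r t).Straddles U}
  have hT : T.Finite := (Set.finite_Iio _).subset fun t ht => ht.1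
  have hsub : B ⊆ {v | v.1 ∈ {i | (wallRow r i).Straddles U} ∧ v.2.val / 2 ∈ insert (r / 2) T} := by
    intro v hv
    refine ⟨⟨hrows v.1, v, rfl, hB hv⟩, ?_⟩
    by_cases ht : v.2.val / 2 < r / 2
    · exact Or.inr ⟨ht, ⟨(i₀, v.2), rfl, h₀ rfl⟩, v, rfl, hB hv⟩
    · exact Or.inl (by have := v.2.isLt; omega)
  calc B.ncard ≤ _ := Set.ncard_le_ncard hsub
    _ ≤ _ := ncard_rows_prod_brickColumns_le _ (hT.insert _)
    _ ≤ _ := by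
      gcongr
      · exact ncard_straddling_rows_le
      · exact (Set.ncard_insert_le _ _).trans (by gcongr; exact ncard_straddling_brickColumns_le)

theorem half_le_ncard_edgeCut_or_ncard_le {i₀ : Fin r} (h₀ : wallRow r i₀ ⊆ U)
    {B : Set (wall r).V} (hB : B ⊆ Uᶜ) :
    r / 2 ≤ ((wall r).edgeCut U).ncard ∨
      B.ncard ≤ 2 * ((wall r).edgeCut U).ncard * (((wall r).edgeCut U).ncard + 1) := by
  by_cases hrows : ∀ i, (wallRow r i ∩ U).Nonempty
  · exact Or.inr (ncard_le_of_subset_compl h₀ hrows hB)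
  · push Not at hrows
    obtain ⟨i₁, h₁⟩ := hrows
    exact Or.inl (half_le_ncard_edgeCut h₀ (Set.subset_compl_iff_disjoint_right.mpr
      (Set.disjoint_iff_inter_eq_empty.mpr h₁)))

end Multigraph

open Multigraph in
theorem wall_no_small_cut_general (k r : ℕ) (hr : 2 * k + 1 ≤ r)
    (A₁ A₂ : Set (wall r).V)
    (hc₁ : A₁.ncard = 2 * k ^ 2) (hc₂ : A₂.ncard = 2 * k ^ 2) :
    ¬ ∃ U : Set (wall r).V, A₁ ⊆ U ∧ A₂ ⊆ Uᶜ ∧ ((wall r).edgeCut U).ncard < k := by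
  rintro ⟨U, hA₁, hA₂, hcut⟩
  obtain ⟨i, hi | hi⟩ := exists_wallRow_subset (U := U) (by omega)
  · rcases half_le_ncard_edgeCut_or_ncard_le hi hA₂ with h | h
    · omega
    · nlinarith [Nat.mul_le_mul hcut hcut]
  · rcases half_le_ncard_edgeCut_or_ncard_le (U := Uᶜ) hi (compl_compl U ▸ hA₁) with h | h <;>
      rw [edgeCut_compl] at h
    · omega
    · nlinarith [Nat.mul_le_mul hcut hcut]

open Multigraph in
/-- in the `r`-wall with `r ≥ 2k+1`, two sets of `2k²` degree-3
vertices cannot be separated by an edge cut of order less than `k`. -/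
theorem wall_no_small_cut (k r : ℕ) (hk : 1 ≤ k) (hr : 2 * k + 1 ≤ r)
    (A₁ A₂ : Set (wall r).V)
    (h₁ : ∀ v ∈ A₁, (wall r).degree v = 3) (h₂ : ∀ v ∈ A₂, (wall r).degree v = 3)
    (hc₁ : A₁.ncard = 2 * k ^ 2) (hc₂ : A₂.ncard = 2 * k ^ 2) :
    ¬ ∃ U : Set (wall r).V, A₁ ⊆ U ∧ A₂ ⊆ Uᶜ ∧ ((wall r).edgeCut U).ncard < k :=
  wall_no_small_cut_general k r hr A₁ A₂ hc₁ hc₂
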